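/- arXiv:quant-ph/0604174 — 3 statements merged into one kernel-verified Lean document; each statement's English description precedes it below -/
import Mathlib

section
/- For any two subgroups H and H' of a finite group G, the trace of the product of their coset states satisfies tr(ρ_H ρ_{H'}) = |H ∩ H'| / |G|. -/
noncomputable section

open scoped BigOperators ComplexOrder

open Classical in
/-- The coset state `ρ_H = (1/|G|) ∑_g |gH⟩⟨gH|`; its `(x, y)` entry is
`1/|G|` if `x⁻¹ y ∈ H` and `0` otherwise. -/
def cosetState {G : Type*} [Group G] [Fintype G] (H : Subgroup G) : Matrix G G ℂ :=
  fun x y => if x⁻¹ * y ∈ H then (1 : ℂ) / (Fintype.card G) else 0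

/-- `k`-fold tensor power of a matrix. -/
def tensorPow {n : Type*} [Fintype n] (M : Matrix n n ℂ) (k : ℕ) :
    Matrix (Fin k → n) (Fin k → n) ℂ :=
  fun x y => ∏ i, M (x i) (y i)

/-- Trace norm `‖Y‖₁ = tr √(Yᴴ Y)`. -/
def traceNorm {n : Type*} [Fintype n] [DecidableEq n] (Y : Matrix n n ℂ) : ℝ :=
  (((Matrix.posSemidef_conjTranspose_mul_self Y).1.eigenvectorUnitary.1 *
      Matrix.diagonal (((↑) : ℝ → ℂ) ∘ (Real.sqrt ·) ∘ (Matrix.posSemidef_conjTranspose_mul_self Y).1.eigenvalues) *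
      (star (Matrix.posSemidef_conjTranspose_mul_self Y).1.eigenvectorUnitary : Matrix n n ℂ)).trace).re

/-- Operator (spectral) norm of a matrix. -/
def opNorm {n : Type*} [Fintype n] [DecidableEq n] (M : Matrix n n ℂ) : ℝ :=
  ‖Matrix.toEuclideanCLM (𝕜 := ℂ) M‖

/-- Square root of the Moore–Penrose pseudoinverse of a Hermitian matrix
(junk value `0` on non-Hermitian input). -/
def pinvSqrt {n : Type*} [Fintype n] [DecidableEq n] (A : Matrix n n ℂ) : Matrix n n ℂ :=
  if h : A.IsHermitian then
    h.eigenvectorUnitary.1 *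
      Matrix.diagonal (fun i => ((Real.sqrt (h.eigenvalues i))⁻¹ : ℂ)) *
      (star h.eigenvectorUnitary : Matrix n n ℂ)
  else 0

/-! Since `H'` is closed under inverses, the `y`-th term of `(ρ_H ρ_{H'})ₓₓ` is `1/|G|²` exactly
when `x⁻¹ y ∈ H ⊓ H'`, and left translation by `x` puts these `y` in bijection with `H ⊓ H'`.
So every diagonal entry is `|H ⊓ H'|/|G|²`. -/

section

variable {G : Type*} [Group G] [Fintype G]

open Classical in
theorem cosetState_apply_mul_apply (H H' : Subgroup G) (x y : G) :
    cosetState H x y * cosetState H' y x =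
      if x⁻¹ * y ∈ H ⊓ H' then 1 / (Fintype.card G : ℂ) ^ 2 else 0 := by
  have hswap : y⁻¹ * x ∈ H' ↔ x⁻¹ * y ∈ H' := by
    rw [← H'.inv_mem_iff, mul_inv_rev, inv_inv]
  simp only [cosetState, hswap, Subgroup.mem_inf]
  split_ifs <;> simp_all [sq]

open Classical in
theorem sum_ite_mul_mem_subgroup (K : Subgroup G) (x : G) (c : ℂ) :
    (∑ y : G, if x * y ∈ K then c else 0) = Nat.card K * c := by
  rw [Fintype.sum_equiv (Equiv.mulLeft x) (fun y => if x * y ∈ K then c else 0)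
      (fun y => if y ∈ K then c else 0) fun _ => rfl,
    ← Finset.sum_filter, Finset.sum_const, nsmul_eq_mul, Nat.card_eq_fintype_card,
    ← Fintype.card_subtype]

theorem cosetState_mul_cosetState_apply_self (H H' : Subgroup G) (x : G) :
    (cosetState H * cosetState H') x x = Nat.card ↥(H ⊓ H') / (Fintype.card G : ℂ) ^ 2 := by
  simp only [Matrix.mul_apply, cosetState_apply_mul_apply, sum_ite_mul_mem_subgroup, mul_one_div]

end

theorem trace_cosetState_mul_cosetState_general {G : Type*} [Group G] [Fintype G]
    (H H' : Subgroup G) :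
    (cosetState H * cosetState H').trace =
      (Nat.card ↥(H ⊓ H') : ℂ) / (Fintype.card G : ℂ) := by
  have hG : (Fintype.card G : ℂ) ≠ 0 := Nat.cast_ne_zero.mpr Fintype.card_ne_zero
  simp only [Matrix.trace, Matrix.diag, cosetState_mul_cosetState_apply_self,
    Finset.sum_const, Finset.card_univ, nsmul_eq_mul]
  field_simp

/-- tr(ρ_H ρ_{H'}) = |H ∩ H'|/|G|. -/
theorem trace_cosetState_mul_cosetState {G : Type*} [Group G] [Fintype G] [DecidableEq G]
    (H H' : Subgroup G) :
    (cosetState H * cosetState H').trace =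
      (Nat.card ↥(H ⊓ H') : ℂ) / (Fintype.card G : ℂ) :=
  trace_cosetState_mul_cosetState_general H H'
end
end

section
/- For any two density matrices ρ₀ and ρ₁ on ℂ^d, the maximum over two-outcome POVMs {M₀, M₁} of the average success probability (1/2)(tr(M₀ρ₀) + tr(M₁ρ₁)) equals 1/2 + (1/4)‖ρ₀ − ρ₁‖₁. -/
/-!
With `M₁ = 1 - M₀` and `tr ρ₁ = 1`, the success probability is `1/2 + 1/2 · Re tr (M₀ Δ)` for
`Δ = ρ₀ - ρ₁`. In an eigenbasis of the Hermitian matrix `Δ`, `Re tr (M₀ Δ) = ∑ᵢ Nᵢᵢ λᵢ` where the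
diagonal entries of `N = U* M₀ U` lie in `[0, 1]` because `0 ≤ M₀ ≤ 1`; so it is at most the sum of
the positive eigenvalues, with equality for the projection onto the nonnegative eigenspace. Since
`tr Δ = 0`, that sum is `½ ∑ᵢ |λᵢ| = ½ ‖Δ‖₁`.
-/

noncomputable section

open scoped BigOperators ComplexOrder

open Matrix Unitary

namespace Matrix.IsHermitian

variable {n : Type*} [Fintype n] [DecidableEq n] {A : Matrix n n ℂ}

lemma trace_cfc (hA : A.IsHermitian) (f : ℝ → ℝ) :
    (cfc f A).trace = ∑ i, (f (hA.eigenvalues i) : ℂ) := by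
  rw [hA.cfc_eq, IsHermitian.cfc, conjStarAlgAut_apply, trace_mul_comm, ← Matrix.mul_assoc,
    coe_star_mul_self, Matrix.one_mul, trace_diagonal]
  rfl

lemma traceNorm_eq_sum_abs_eigenvalues (hA : A.IsHermitian) :
    traceNorm A = ∑ i, |hA.eigenvalues i| := by
  have hsqrt : traceNorm A = (cfc Real.sqrt (Aᴴ * A)).trace.re := by
    rw [(posSemidef_conjTranspose_mul_self A).1.cfc_eq, IsHermitian.cfc, conjStarAlgAut_apply]
    rfl
  have habs : cfc Real.sqrt (Aᴴ * A) = cfc (fun x : ℝ => |x|) A := by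
    rw [hA.eq, ← pow_two,
      ← cfc_comp_pow Real.sqrt 2 A Real.continuous_sqrt.continuousOn hA.isSelfAdjoint]
    exact cfc_congr fun x _ => Real.sqrt_sq_eq_abs x
  rw [hsqrt, habs, hA.trace_cfc, ← Complex.ofReal_sum, Complex.ofReal_re]

lemma trace_mul_eq_sum (hA : A.IsHermitian) (M : Matrix n n ℂ) :
    (M * A).trace = ∑ i, (star (hA.eigenvectorUnitary : Matrix n n ℂ) * M *
      hA.eigenvectorUnitary) i i * hA.eigenvalues i := by
  set U : Matrix n n ℂ := (hA.eigenvectorUnitary : Matrix n n ℂ)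
  have hU : U * star U = 1 := coe_mul_star_self _
  have hdiag := hA.conjStarAlgAut_star_eigenvectorUnitary
  rw [conjStarAlgAut_star_apply] at hdiag
  calc (M * A).trace = (star U * M * U * (star U * A * U)).trace := by
        rw [show star U * M * U * (star U * A * U) = star U * (M * A * U) by
            simp only [Matrix.mul_assoc, ← Matrix.mul_assoc U, hU, Matrix.one_mul],
          trace_mul_comm (star U), Matrix.mul_assoc, hU, Matrix.mul_one]
    _ = _ := by
        rw [hdiag]
        simp [trace, mul_diagonal]

lemma re_trace_mul_le_sum_max_eigenvalues_zero (hA : A.IsHermitian) {M : Matrix n n ℂ}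
    (hM : M.PosSemidef) (hM' : (1 - M).PosSemidef) :
    (M * A).trace.re ≤ ∑ i, max (hA.eigenvalues i) 0 := by
  set U : Matrix n n ℂ := (hA.eigenvectorUnitary : Matrix n n ℂ)
  have hN := hM.conjTranspose_mul_mul_same U
  have hN' := hM'.conjTranspose_mul_mul_same U
  rw [← star_eq_conjTranspose] at hN hN'
  rw [Matrix.mul_sub, Matrix.sub_mul, Matrix.mul_one, coe_star_mul_self] at hN'
  rw [hA.trace_mul_eq_sum, Complex.re_sum]
  refine Finset.sum_le_sum fun i _ => ?_
  obtain ⟨h0, -⟩ := Complex.le_def.mp (hN.diag_nonneg (i := i))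
  obtain ⟨h1, -⟩ := Complex.le_def.mp (hN'.diag_nonneg (i := i))
  simp only [sub_apply, one_apply_eq, Complex.sub_re, Complex.one_re, Complex.zero_re] at h0 h1
  rw [Complex.re_mul_ofReal]
  rcases le_total 0 (hA.eigenvalues i) with h | h
  · nlinarith [le_max_left (hA.eigenvalues i) 0]
  · nlinarith [le_max_right (hA.eigenvalues i) 0]

def nonnegSpectralProjection (hA : A.IsHermitian) : Matrix n n ℂ :=
  (hA.eigenvectorUnitary : Matrix n n ℂ) *
    diagonal (fun i => if 0 ≤ hA.eigenvalues i then 1 else 0) *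
    star (hA.eigenvectorUnitary : Matrix n n ℂ)

lemma posSemidef_nonnegSpectralProjection (hA : A.IsHermitian) :
    hA.nonnegSpectralProjection.PosSemidef :=
  (PosSemidef.diagonal fun i => by split_ifs <;> simp).mul_mul_conjTranspose_same _

lemma posSemidef_one_sub_nonnegSpectralProjection (hA : A.IsHermitian) :
    (1 - hA.nonnegSpectralProjection).PosSemidef := by
  rw [nonnegSpectralProjection]
  set U : Matrix n n ℂ := (hA.eigenvectorUnitary : Matrix n n ℂ)
  have hU : U * star U = 1 := mul_star_self_of_mem hA.eigenvectorUnitary.2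
  have hcompl : 1 - U * diagonal (fun i => if 0 ≤ hA.eigenvalues i then 1 else 0) * star U =
      U * diagonal (fun i => if 0 ≤ hA.eigenvalues i then 0 else 1) * star U := by
    calc _ = U * (1 - diagonal fun i => if 0 ≤ hA.eigenvalues i then 1 else 0) * star U := by
          rw [Matrix.mul_sub, Matrix.sub_mul, Matrix.mul_one, hU]
      _ = _ := by
          rw [← diagonal_one, diagonal_sub]
          congr 3 with i
          split_ifs <;> norm_num
  rw [hcompl]
  exact (PosSemidef.diagonal fun i => by split_ifs <;> simp).mul_mul_conjTranspose_same _

lemma re_trace_nonnegSpectralProjection_mul (hA : A.IsHermitian) :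
    (hA.nonnegSpectralProjection * A).trace.re = ∑ i, max (hA.eigenvalues i) 0 := by
  rw [hA.trace_mul_eq_sum, nonnegSpectralProjection, Complex.re_sum]
  have hU : star (hA.eigenvectorUnitary : Matrix n n ℂ) * hA.eigenvectorUnitary = 1 :=
    star_mul_self_of_mem hA.eigenvectorUnitary.2
  simp only [← Matrix.mul_assoc, hU, Matrix.one_mul]
  rw [Matrix.mul_assoc, hU, Matrix.mul_one]
  refine Finset.sum_congr rfl fun i _ => ?_
  rw [diagonal_apply_eq]
  split_ifs with h
  · simp [h]
  · simp [le_of_not_ge h]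

lemma isGreatest_re_trace_mul (hA : A.IsHermitian) :
    IsGreatest {t : ℝ | ∃ M : Matrix n n ℂ, M.PosSemidef ∧ (1 - M).PosSemidef ∧
      t = (M * A).trace.re} ((A.trace.re + traceNorm A) / 2) := by
  have hval : (A.trace.re + traceNorm A) / 2 = ∑ i, max (hA.eigenvalues i) 0 := by
    rw [hA.trace_eq_sum_eigenvalues, hA.traceNorm_eq_sum_abs_eigenvalues]
    simp only [Complex.coe_algebraMap, Complex.re_sum, Complex.ofReal_re, ← Finset.sum_add_distrib,
      Finset.sum_div]
    refine Finset.sum_congr rfl fun i _ => ?_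
    rcases le_total 0 (hA.eigenvalues i) with h | h
    · rw [abs_of_nonneg h, max_eq_left h]; ring
    · rw [abs_of_nonpos h, max_eq_right h]; ring
  rw [hval]
  exact ⟨⟨_, hA.posSemidef_nonnegSpectralProjection,
      hA.posSemidef_one_sub_nonnegSpectralProjection,
      hA.re_trace_nonnegSpectralProjection_mul.symm⟩,
    fun _ ⟨_, hM, hM', ht⟩ => ht ▸ hA.re_trace_mul_le_sum_max_eigenvalues_zero hM hM'⟩

end Matrix.IsHermitian

lemma Matrix.trace_mul_add_trace_mul_of_add_eq_one {n R : Type*} [Fintype n] [DecidableEq n]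
    [Ring R] {M₀ M₁ : Matrix n n R} (h : M₀ + M₁ = 1) (ρ₀ ρ₁ : Matrix n n R) :
    (M₀ * ρ₀).trace + (M₁ * ρ₁).trace = ρ₁.trace + (M₀ * (ρ₀ - ρ₁)).trace := by
  rw [eq_sub_of_add_eq' h, Matrix.sub_mul, Matrix.one_mul, Matrix.mul_sub, trace_sub, trace_sub]
  abel

/-- Holevo–Helstrom: the optimal average success probability of distinguishing two
density matrices equals 1/2 + (1/4)‖ρ₀ − ρ₁‖₁. -/
theorem holevo_helstrom {d : ℕ} (ρ₀ ρ₁ : Matrix (Fin d) (Fin d) ℂ)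
    (h₀ : ρ₀.PosSemidef) (h₁ : ρ₁.PosSemidef)
    (ht₀ : ρ₀.trace = 1) (ht₁ : ρ₁.trace = 1) :
    IsGreatest {p : ℝ | ∃ M₀ M₁ : Matrix (Fin d) (Fin d) ℂ,
        M₀.PosSemidef ∧ M₁.PosSemidef ∧ M₀ + M₁ = 1 ∧
        p = (1/2) * (((M₀ * ρ₀).trace).re + ((M₁ * ρ₁).trace).re)}
      (1/2 + (1/4) * traceNorm (ρ₀ - ρ₁)) := by
  obtain ⟨⟨M, hM, hM', hopt⟩, hbound⟩ := (h₀.1.sub h₁.1).isGreatest_re_trace_mul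
  have hsuccess {M₀ M₁ : Matrix (Fin d) (Fin d) ℂ} (h : M₀ + M₁ = 1) :
      (M₀ * ρ₀).trace.re + (M₁ * ρ₁).trace.re = 1 + (M₀ * (ρ₀ - ρ₁)).trace.re := by
    simpa [ht₁] using congrArg Complex.re (trace_mul_add_trace_mul_of_add_eq_one h ρ₀ ρ₁)
  have htrace : (ρ₀ - ρ₁).trace.re = 0 := by simp [trace_sub, ht₀, ht₁]
  rw [htrace, zero_add] at hopt hbound
  refine ⟨⟨M, 1 - M, hM, hM', add_sub_cancel M 1, ?_⟩, ?_⟩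
  · rw [hsuccess (add_sub_cancel M 1), ← hopt]
    ring
  · rintro p ⟨M₀, M₁, hM₀, hM₁, hsum, rfl⟩
    have hle := hbound ⟨M₀, hM₀, eq_sub_of_add_eq' hsum ▸ hM₁, rfl⟩
    rw [hsuccess hsum]
    linarith
end
end

section
/- Let 𝓗 be a finite set of subgroups of a finite group G and suppose d := min_{H≠H'∈𝓗} |H|/|H∩H'| > 1. Then for k ≥ (log(16|𝓗|))/(log d), the pretty good measurement on k copies identifies any coset state ρ_H, H ∈ 𝓗, with error probability at most 1/4. -/
noncomputable section

open scoped BigOperators ComplexOrder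

/-!
Write `Q = P_H^{⊗k}` and `S = ∑_K P_K^{⊗k}`, so that `ρ_H^{⊗k} = (|H|/|G|)^k Q`. Since `S ≥ Q`, in an
eigenbasis of `S` (eigenvalues `λ_i`, and `w_ij = |Q_ij|²` for the entries of `Q` in that basis)
every `w_ij ≠ 0` forces `λ_i, λ_j > 0`, and
`tr Q = ∑ w_ij`, `tr (S Q) = ∑ λ_i w_ij = ∑ (λ_i + λ_j)/2 · w_ij`, `tr (S^{-1/2} Q S^{-1/2} Q) = ∑ w_ij / √(λ_i λ_j)`.
Termwise AM–GM, `(λ_i + λ_j)/2 + 1/√(λ_i λ_j) ≥ √(λ_i λ_j) + 1/√(λ_i λ_j) ≥ 2`, gives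
`tr (Q - S^{-1/2} Q S^{-1/2} Q) ≤ tr ((S - Q) Q)`. Hence the error of the pretty good measurement on
`ρ_H^{⊗k}` is at most `tr ((S - Q) ρ_H^{⊗k}) = ∑_{K ≠ H} (|K ∩ H| / |K|)^k ≤ |𝓗| d^{-k} ≤ 1/16`.
-/

open Matrix Finset

section TensorPow

variable {n : Type*} [Fintype n]

theorem tensorPow_mul (M N : Matrix n n ℂ) (k : ℕ) :
    tensorPow M k * tensorPow N k = tensorPow (M * N) k := by
  ext x y
  simp only [tensorPow, mul_apply, ← prod_mul_distrib]
  rw [prod_univ_sum, Fintype.piFinset_univ]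

theorem trace_tensorPow (M : Matrix n n ℂ) (k : ℕ) : (tensorPow M k).trace = M.trace ^ k := by
  change ∑ x : Fin k → n, ∏ i, M (x i) (x i) = (∑ a, M a a) ^ k
  rw [← Fin.prod_const, prod_univ_sum, Fintype.piFinset_univ]

theorem conjTranspose_tensorPow (M : Matrix n n ℂ) (k : ℕ) :
    (tensorPow M k)ᴴ = tensorPow Mᴴ k := by
  ext x y
  simp [tensorPow, conjTranspose_apply, star_prod]

theorem tensorPow_smul (c : ℂ) (M : Matrix n n ℂ) (k : ℕ) :
    tensorPow (c • M) k = c ^ k • tensorPow M k := by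
  ext x y
  simp [tensorPow, prod_mul_distrib]

theorem IsStarProjection.tensorPow {P : Matrix n n ℂ} (hP : IsStarProjection P) (k : ℕ) :
    IsStarProjection (_root_.tensorPow P k) :=
  ⟨by rw [IsIdempotentElem, tensorPow_mul, hP.isIdempotentElem.eq],
   by rw [IsSelfAdjoint, star_eq_conjTranspose, conjTranspose_tensorPow, ← star_eq_conjTranspose,
     hP.isSelfAdjoint.star_eq]⟩

end TensorPow

theorem two_le_add_div_two_add_inv_sqrt_mul_inv_sqrt {a b : ℝ} (ha : 0 < a) (hb : 0 < b) :
    2 ≤ (a + b) / 2 + (√a)⁻¹ * (√b)⁻¹ := by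
  have hp : 0 < √a * √b := by positivity
  have amgm : √a * √b ≤ (a + b) / 2 := by
    nlinarith [sq_nonneg (√a - √b), Real.sq_sqrt ha.le, Real.sq_sqrt hb.le]
  have : 2 ≤ √a * √b + (√a * √b)⁻¹ := by
    rw [← sub_nonneg, show √a * √b + (√a * √b)⁻¹ - 2 = (√a * √b - 1) ^ 2 / (√a * √b) by
      field_simp; ring]
    positivity
  rw [← mul_inv]
  linarith

theorem two_mul_sum_le_sum_mul_add_sum_inv_sqrt_mul {n : Type*} [Fintype n] {w : n → n → ℝ}
    {lam : n → ℝ} (hw : ∀ i j, 0 ≤ w i j) (hsymm : ∀ i j, w i j = w j i)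
    (hle : ∀ i j, w i j ≤ lam i) :
    2 * ∑ i, ∑ j, w i j ≤
      ∑ i, ∑ j, lam i * w i j + ∑ i, ∑ j, (√(lam i))⁻¹ * (√(lam j))⁻¹ * w i j := by
  have swap : ∑ i, ∑ j, lam i * w i j = ∑ i, ∑ j, lam j * w i j := by
    rw [sum_comm]
    simp only [hsymm]
  have term (i j : n) :
      2 * w i j ≤ (lam i + lam j) / 2 * w i j + (√(lam i))⁻¹ * (√(lam j))⁻¹ * w i j := by
    rcases (hw i j).eq_or_lt with hz | hpos
    · simp [← hz]
    · have := two_le_add_div_two_add_inv_sqrt_mul_inv_sqrt (hpos.trans_le (hle i j))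
        (hpos.trans_le ((hsymm i j).trans_le (hle j i)))
      nlinarith
  calc 2 * ∑ i, ∑ j, w i j = ∑ i, ∑ j, 2 * w i j := by simp only [mul_sum]
    _ ≤ ∑ i, ∑ j, ((lam i + lam j) / 2 * w i j + (√(lam i))⁻¹ * (√(lam j))⁻¹ * w i j) :=
      sum_le_sum fun i _ => sum_le_sum fun j _ => term i j
    _ = _ := by
      simp only [sum_add_distrib, add_div, add_mul, div_mul_eq_mul_div, ← sum_div, ← swap]
      ring

section PrettyGoodMeasurement

variable {n : Type*} [Fintype n]

theorem IsStarProjection.apply_self_eq_sum_normSq {X : Matrix n n ℂ} (hX : IsStarProjection X)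
    (i : n) : X i i = ((∑ j, Complex.normSq (X i j) : ℝ) : ℂ) := by
  conv_lhs => rw [← hX.isIdempotentElem.eq]
  push_cast
  refine sum_congr rfl fun j _ => ?_
  change X i j * X j i = _
  rw [← Complex.mul_conj, ← IsHermitian.apply hX.isSelfAdjoint j i]
  rfl

theorem IsStarProjection.posSemidef {P : Matrix n n ℂ} (hP : IsStarProjection P) :
    P.PosSemidef := by
  simpa [← star_eq_conjTranspose, hP.isSelfAdjoint.star_eq, hP.isIdempotentElem.eq] using
    posSemidef_conjTranspose_mul_self P

variable [DecidableEq n]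

theorem Matrix.IsHermitian.trace_diagonal_mul_mul_diagonal_mul {X : Matrix n n ℂ}
    (hX : X.IsHermitian) (a b : n → ℝ) :
    (diagonal (fun i => (a i : ℂ)) * X * diagonal (fun i => (b i : ℂ)) * X).trace =
      ((∑ i, ∑ j, a i * b j * Complex.normSq (X i j) : ℝ) : ℂ) := by
  push_cast
  refine sum_congr rfl fun i _ => (mul_apply ..).trans (sum_congr rfl fun j _ => ?_)
  rw [mul_diagonal, diagonal_mul, ← hX.apply j i, ← Complex.mul_conj, Complex.star_def]
  ring

theorem IsStarProjection.normSq_apply_le {X : Matrix n n ℂ} (hX : IsStarProjection X)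
    {lam : n → ℝ} (hD : (diagonal (fun i => (lam i : ℂ)) - X).PosSemidef) (i j : n) :
    Complex.normSq (X i j) ≤ lam i := by
  have := hD.diag_nonneg (i := i)
  rw [Matrix.sub_apply, diagonal_apply_eq, hX.apply_self_eq_sum_normSq, ← Complex.ofReal_sub,
    Complex.zero_le_real, sub_nonneg] at this
  exact (single_le_sum (fun j _ => Complex.normSq_nonneg _) (mem_univ j)).trans this

theorem IsStarProjection.re_trace_sub_diagonal_mul_le {X : Matrix n n ℂ} (hX : IsStarProjection X)
    {lam : n → ℝ} (hD : (diagonal (fun i => (lam i : ℂ)) - X).PosSemidef) :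
    (X - diagonal (fun i => (((√(lam i))⁻¹ : ℝ) : ℂ)) * X *
        diagonal (fun i => (((√(lam i))⁻¹ : ℝ) : ℂ)) * X).trace.re ≤
      ((diagonal (fun i => (lam i : ℂ)) - X) * X).trace.re := by
  have hXh : X.IsHermitian := hX.isSelfAdjoint
  have trace_X : X.trace = (diagonal (fun _ => ((1 : ℝ) : ℂ)) * X *
      diagonal (fun _ => ((1 : ℝ) : ℂ)) * X).trace := by
    simp [hX.isIdempotentElem.eq]
  have trace_DX : (diagonal (fun i => (lam i : ℂ)) * X).trace = (diagonal (fun i => (lam i : ℂ)) *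
      X * diagonal (fun _ => ((1 : ℝ) : ℂ)) * X).trace := by
    simp [mul_assoc, hX.isIdempotentElem.eq]
  rw [trace_sub, sub_mul, hX.isIdempotentElem.eq, trace_sub, trace_DX, trace_X,
    hXh.trace_diagonal_mul_mul_diagonal_mul, hXh.trace_diagonal_mul_mul_diagonal_mul,
    hXh.trace_diagonal_mul_mul_diagonal_mul]
  simp only [Complex.sub_re, Complex.ofReal_re, one_mul, mul_one]
  linarith [two_mul_sum_le_sum_mul_add_sum_inv_sqrt_mul (fun i j => Complex.normSq_nonneg (X i j))
    (fun i j => by rw [← hXh.apply i j, Complex.star_def, Complex.normSq_conj])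
    (hX.normSq_apply_le hD)]

theorem re_trace_sub_pinvSqrt_mul_le {S Q : Matrix n n ℂ} (hQ : IsStarProjection Q)
    (hSQ : (S - Q).PosSemidef) :
    (Q - pinvSqrt S * Q * pinvSqrt S * Q).trace.re ≤ ((S - Q) * Q).trace.re := by
  have hS : S.IsHermitian := by
    simpa using hSQ.isHermitian.add (hQ.isSelfAdjoint : Q.IsHermitian)
  set U := hS.eigenvectorUnitary
  set lam := hS.eigenvalues
  set ψ := Unitary.conjStarAlgAut ℂ (Matrix n n ℂ) U
  have trace_ψ (Y : Matrix n n ℂ) : (ψ Y).trace = Y.trace := by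
    rw [Unitary.conjStarAlgAut_apply, trace_mul_cycle, Unitary.coe_star_mul_self, one_mul]
  have hS_eq : S = ψ (diagonal fun i => (lam i : ℂ)) := hS.spectral_theorem
  have hT_eq : pinvSqrt S = ψ (diagonal fun i => ((√(lam i))⁻¹ : ℝ)) := by
    simp [pinvSqrt, hS, ψ, U, lam]
  have hQ_eq : Q = ψ (ψ.symm Q) := (ψ.apply_symm_apply Q).symm
  have hD : (diagonal (fun i => (lam i : ℂ)) - ψ.symm Q).PosSemidef := by
    rw [← ψ.symm_apply_apply (diagonal _), ← hS_eq, ← map_sub]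
    exact hSQ.conjTranspose_mul_mul_same (U : Matrix n n ℂ)
  rw [hT_eq, hQ_eq, hS_eq, ← map_mul, ← map_mul, ← map_mul, ← map_sub, ← map_sub, ← map_mul,
    trace_ψ, trace_ψ]
  exact (hQ.map ψ.symm).re_trace_sub_diagonal_mul_le hD

theorem re_trace_one_sub_pinvSqrt_mul_le {S Q ρ : Matrix n n ℂ} (hQ : IsStarProjection Q)
    (hSQ : (S - Q).PosSemidef) {c : ℝ} (hc : 0 ≤ c) (hρ : ρ = (c : ℂ) • Q) :
    ((1 - pinvSqrt S * Q * pinvSqrt S) * ρ).trace.re ≤ ((S - Q) * ρ).trace.re := by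
  rw [hρ, Matrix.mul_smul, Matrix.mul_smul, trace_smul, trace_smul, smul_eq_mul, smul_eq_mul,
    Complex.re_ofReal_mul, Complex.re_ofReal_mul, sub_mul, one_mul]
  exact mul_le_mul_of_nonneg_left (re_trace_sub_pinvSqrt_mul_le hQ hSQ) hc

end PrettyGoodMeasurement

theorem Subgroup.inv_mul_mem_comm {G : Type*} [Group G] {H : Subgroup G} {x y : G} :
    y⁻¹ * x ∈ H ↔ x⁻¹ * y ∈ H := by
  rw [← H.inv_mem_iff, _root_.mul_inv_rev, inv_inv]

section CosetProj

variable {G : Type*} [Group G] [Fintype G]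

theorem card_filter_inv_mul_mem (x : G) (H : Subgroup G) [DecidablePred fun y => x⁻¹ * y ∈ H] :
    #{y | x⁻¹ * y ∈ H} = Nat.card H := by
  rw [← Fintype.card_subtype, ← Nat.card_eq_fintype_card]
  exact Nat.card_congr (Equiv.subtypeEquiv (Equiv.mulLeft x) (by simp)).symm

/-- The support projection `P_H` of `ρ_H`. -/
def cosetProj (H : Subgroup G) : Matrix G G ℂ :=
  ((Fintype.card G : ℂ) / (Nat.card H : ℂ)) • cosetState H

open Classical in
theorem cosetProj_apply (H : Subgroup G) (x y : G) :
    cosetProj H x y = if x⁻¹ * y ∈ H then (Nat.card H : ℂ)⁻¹ else 0 := by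
  have : (Fintype.card G : ℂ) ≠ 0 := Nat.cast_ne_zero.mpr Fintype.card_ne_zero
  rw [cosetProj, Matrix.smul_apply, cosetState, smul_eq_mul]
  split_ifs
  · field_simp
  · exact mul_zero _

theorem tensorPow_cosetState (H : Subgroup G) (k : ℕ) :
    tensorPow (cosetState H) k =
      ((((Nat.card H : ℝ) / Fintype.card G) ^ k : ℝ) : ℂ) • tensorPow (cosetProj H) k := by
  have hH : (Nat.card H : ℂ) ≠ 0 := Nat.cast_ne_zero.mpr Nat.card_pos.ne'
  have hG : (Fintype.card G : ℂ) ≠ 0 := Nat.cast_ne_zero.mpr Fintype.card_ne_zero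
  rw [cosetProj, tensorPow_smul, smul_smul, Complex.ofReal_pow, ← mul_pow]
  push_cast
  rw [div_mul_div_cancel₀ hG, div_self hH, one_pow, one_smul]

open Classical in
theorem isStarProjection_cosetProj (H : Subgroup G) : IsStarProjection (cosetProj H) := by
  refine ⟨?_, ?_⟩
  · ext x z
    have mem_iff {y : G} (hy : x⁻¹ * y ∈ H) : y⁻¹ * z ∈ H ↔ x⁻¹ * z ∈ H := by
      rw [← H.mul_mem_cancel_left hy, ← mul_assoc, mul_inv_cancel_right]
    have hH : (Nat.card H : ℂ) ≠ 0 := Nat.cast_ne_zero.mpr Nat.card_pos.ne'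
    calc (cosetProj H * cosetProj H) x z
        = ∑ y, if x⁻¹ * y ∈ H then cosetProj H x z * (Nat.card H : ℂ)⁻¹ else 0 := by
          refine sum_congr rfl fun y _ => ?_
          by_cases hy : x⁻¹ * y ∈ H <;> simp [cosetProj_apply, hy, mem_iff]
      _ = cosetProj H x z := by
          rw [sum_ite, sum_const_zero, add_zero, sum_const, card_filter_inv_mul_mem x H,
            nsmul_eq_mul, mul_left_comm, mul_inv_cancel₀ hH, mul_one]
  · ext x y
    rw [star_apply, cosetProj_apply, cosetProj_apply, H.inv_mul_mem_comm]
    split_ifs <;> simp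

open Classical in
theorem trace_cosetProj_mul_cosetState (K H : Subgroup G) :
    (cosetProj K * cosetState H).trace = (Nat.card ↥(K ⊓ H) : ℂ) / Nat.card K := by
  have hG : (Fintype.card G : ℂ) ≠ 0 := Nat.cast_ne_zero.mpr Fintype.card_ne_zero
  have diag_eq (x : G) : (cosetProj K * cosetState H) x x =
      ∑ y, if x⁻¹ * y ∈ K ⊓ H then (Nat.card K : ℂ)⁻¹ * (1 / Fintype.card G) else 0 := by
    refine sum_congr rfl fun y _ => ?_
    by_cases hK : x⁻¹ * y ∈ K <;> by_cases hH : x⁻¹ * y ∈ H <;>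
      simp [cosetProj_apply, cosetState, hK, hH, H.inv_mul_mem_comm (x := x)]
  simp only [trace, Matrix.diag, diag_eq, ← sum_filter, sum_const, card_filter_inv_mul_mem,
    card_univ, nsmul_eq_mul]
  field_simp

theorem re_trace_pgm_cosetState_le [DecidableEq G] [DecidableEq (Subgroup G)]
    (𝓗 : Finset (Subgroup G)) {H : Subgroup G} (hH : H ∈ 𝓗) (k : ℕ) :
    ((1 - pinvSqrt (∑ K ∈ 𝓗, tensorPow (cosetProj K) k) * tensorPow (cosetProj H) k *
        pinvSqrt (∑ K ∈ 𝓗, tensorPow (cosetProj K) k)) * tensorPow (cosetState H) k).trace.re ≤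
      ∑ K ∈ 𝓗.erase H, ((Nat.card ↥(K ⊓ H) : ℝ) / Nat.card K) ^ k := by
  have overlap : ∑ K ∈ 𝓗, tensorPow (cosetProj K) k - tensorPow (cosetProj H) k =
      ∑ K ∈ 𝓗.erase H, tensorPow (cosetProj K) k := by
    rw [← add_sum_erase _ _ hH, add_sub_cancel_left]
  refine (re_trace_one_sub_pinvSqrt_mul_le ((isStarProjection_cosetProj H).tensorPow k) ?_
    (by positivity) (tensorPow_cosetState H k)).trans_eq ?_
  · rw [overlap]
    exact posSemidef_sum _ fun K _ => ((isStarProjection_cosetProj K).tensorPow k).posSemidef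
  · rw [overlap, sum_mul, trace_sum, Complex.re_sum]
    refine sum_congr rfl fun K _ => ?_
    have : ((Nat.card ↥(K ⊓ H) : ℂ) / Nat.card K) ^ k =
        (((Nat.card ↥(K ⊓ H) : ℝ) / Nat.card K) ^ k : ℝ) := by
      push_cast
      rfl
    rw [tensorPow_mul, trace_tensorPow, trace_cosetProj_mul_cosetState, this, Complex.ofReal_re]

end CosetProj

theorem card_mul_inv_pow_le_of_log_div_le {N d : ℝ} {k : ℕ} (hN : 0 < N) (hd : 1 < d)
    (hk : Real.log (16 * N) / Real.log d ≤ k) : N * d⁻¹ ^ k ≤ 1 / 16 := by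
  have hdk : 16 * N ≤ d ^ k := by
    rw [div_le_iff₀ (Real.log_pos hd), ← Real.log_pow] at hk
    exact (Real.log_le_log_iff (by positivity) (by positivity)).mp (by linarith)
  rw [inv_pow, ← div_eq_mul_inv, div_le_div_iff₀ (by positivity) (by norm_num)]
  linarith

open Classical in
/-- If d := min over distinct H, H' ∈ 𝓗 of |H|/|H∩H'| exceeds 1, then for
k ≥ log(16|𝓗|)/log d the pretty good measurement identifies any coset state with
error probability at most 1/4. -/
theorem pgm_identifies_with_error_le_quarter {G : Type*} [Group G] [Fintype G] [DecidableEq G]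
    (𝓗 : Finset (Subgroup G)) (h2 : 𝓗.offDiag.Nonempty) (k : ℕ) (d : ℝ)
    (hd : d = 𝓗.offDiag.inf' h2 fun q => (Nat.card ↥q.1 : ℝ) / (Nat.card ↥(q.1 ⊓ q.2) : ℝ))
    (hd1 : 1 < d)
    (hk : Real.log (16 * (𝓗.card : ℝ)) / Real.log d ≤ (k : ℝ)) :
    ∀ H ∈ 𝓗,
      ((((1 : Matrix (Fin k → G) (Fin k → G) ℂ) -
          pinvSqrt (∑ K ∈ 𝓗,
              tensorPow (((Fintype.card G : ℂ) / (Nat.card ↥K : ℂ)) • cosetState K) k) *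
            tensorPow (((Fintype.card G : ℂ) / (Nat.card ↥H : ℂ)) • cosetState H) k *
            pinvSqrt (∑ K ∈ 𝓗,
              tensorPow (((Fintype.card G : ℂ) / (Nat.card ↥K : ℂ)) • cosetState K) k)) *
        tensorPow (cosetState H) k).trace).re ≤ 1/4 := by
  intro H hH
  simp only [← cosetProj.eq_1]
  have overlap_le (K : Subgroup G) (hK : K ∈ 𝓗.erase H) :
      (Nat.card ↥(K ⊓ H) : ℝ) / Nat.card K ≤ d⁻¹ := by
    have hmem : (K, H) ∈ 𝓗.offDiag :=
      mem_offDiag.mpr ⟨mem_of_mem_erase hK, hH, ne_of_mem_erase hK⟩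
    rw [← inv_div]
    refine inv_anti₀ (by linarith) ?_
    rw [hd]
    exact inf'_le (fun q : Subgroup G × Subgroup G => (Nat.card q.1 : ℝ) / Nat.card ↥(q.1 ⊓ q.2))
      hmem
  refine (re_trace_pgm_cosetState_le 𝓗 hH k).trans ?_
  calc ∑ K ∈ 𝓗.erase H, ((Nat.card ↥(K ⊓ H) : ℝ) / Nat.card K) ^ k
      ≤ ∑ K ∈ 𝓗.erase H, d⁻¹ ^ k :=
        sum_le_sum fun K hK => pow_le_pow_left₀ (by positivity) (overlap_le K hK) k
    _ ≤ 𝓗.card * d⁻¹ ^ k := by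
        rw [sum_const, nsmul_eq_mul]
        gcongr
        exact erase_subset H 𝓗
    _ ≤ 1 / 16 := card_mul_inv_pow_le_of_log_div_le (mod_cast card_pos.mpr ⟨H, hH⟩) hd1 hk
    _ ≤ 1 / 4 := by norm_num
end
end
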